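/- arXiv:2007.04530 — 8 statements merged into one kernel-verified Lean document; each statement's English description precedes it below -/
import Mathlib

section
/- A multigraph Y is a generalized truncation of a reflexive multigraph if and only if Y contains a perfect matching M such that the multigraph obtained from Y by deleting the edges of M is a simple graph (no loops or multiple edges). -/
/-- A multigraph (possibly with loops and multiple edges): a vertex type,
an edge type, and an incidence map assigning to each edge its unordered pair of ends. -/
structure Multigraph where
  V : Type
  E : Type
  ends : E → Sym2 V

namespace Multigraph

/-- Two vertices are adjacent if some edge joins them. -/
def Adj (X : Multigraph) (u v : X.V) : Prop := ∃ e, X.ends e = s(u, v)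

/-- Reachability by walks. -/
def Reachable (X : Multigraph) : X.V → X.V → Prop := Relation.ReflTransGen X.Adj

/-- A multigraph is connected if every vertex reaches every other. -/
def Connected (X : Multigraph) : Prop := ∀ u v, X.Reachable u v

/-- No loops. -/
def Loopless (X : Multigraph) : Prop := ∀ e, ¬ (X.ends e).IsDiag

/-- Delete a set of edges. -/
def deleteEdges (X : Multigraph) (S : Set X.E) : Multigraph :=
  ⟨X.V, {e // e ∉ S}, fun e => X.ends e.1⟩

/-- A multigraph is a simple graph: no loops and no two parallel edges. -/
def IsSimple (X : Multigraph) : Prop :=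
  X.Loopless ∧ ∀ e f, X.ends e = X.ends f → e = f

/-- A perfect matching: a set of non-loop edges such that every vertex is
incident with exactly one edge of the set. -/
def IsPerfectMatching (X : Multigraph) (M : Set X.E) : Prop :=
  (∀ e ∈ M, ¬ (X.ends e).IsDiag) ∧ ∀ v : X.V, ∃! e, e ∈ M ∧ v ∈ X.ends e

/-- The valency of a vertex (loops would count once here; used for loopless graphs). -/
noncomputable def degree (X : Multigraph) (v : X.V) : ℕ∞ := {e | v ∈ X.ends e}.encard

/-- Data realizing `Y` as a generalized truncation of `X`:
`label` sends each vertex of `Y` to the vertex of `X` whose cluster contains it,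
`emb` sends each edge of `X` to the corresponding matching edge of `F(M)` in `Y`;
the matching edges form a perfect matching whose ends are labelled by the ends of the
original edge, all remaining (constituent) edges lie inside a single cluster, and the
constituents form a simple graph. -/
structure TruncationData (X Y : Multigraph) where
  label : Y.V → X.V
  emb : X.E → Y.E
  emb_inj : Function.Injective emb
  label_surj : Function.Surjective label
  ends_map : ∀ e, (Y.ends (emb e)).map label = X.ends e
  emb_ne : ∀ e, ¬ (Y.ends (emb e)).IsDiag
  matching : ∀ v : Y.V, ∃! e : X.E, v ∈ Y.ends (emb e)
  cluster : ∀ f : Y.E, f ∉ Set.range emb → ((Y.ends f).map label).IsDiag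
  simple : (Y.deleteEdges (Set.range emb)).IsSimple

/-- `Y` is a generalized truncation of `X`. -/
def IsGenTruncation (X Y : Multigraph) : Prop := Nonempty (X.TruncationData Y)

/-- Isomorphism of multigraphs. -/
structure Iso (X Y : Multigraph) where
  vEquiv : X.V ≃ Y.V
  eEquiv : X.E ≃ Y.E
  ends_map : ∀ e, (X.ends e).map vEquiv = Y.ends (eEquiv e)

/-- A truncation is complete if every constituent is a complete graph. -/
def TruncationData.Complete {X Y : Multigraph} (T : TruncationData X Y) : Prop :=
  ∀ x y : Y.V, x ≠ y → T.label x = T.label y →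
    ∃ f, f ∉ Set.range T.emb ∧ Y.ends f = s(x, y)

/-- A truncation is cohesive if every constituent is connected. -/
def TruncationData.Cohesive {X Y : Multigraph} (T : TruncationData X Y) : Prop :=
  ∀ v : X.V, ∀ x y : Y.V, T.label x = v → T.label y = v →
    Relation.ReflTransGen
      (fun a b => T.label a = v ∧ T.label b = v ∧
        ∃ f, f ∉ Set.range T.emb ∧ Y.ends f = s(a, b)) x y

/-- Walks in a multigraph, recording the edges used. -/
inductive Walk (X : Multigraph) : X.V → X.V → Type
  | nil (v : X.V) : Walk X v v
  | cons {u v w : X.V} (e : X.E) (h : X.ends e = s(u, v)) (p : Walk X v w) : Walk X u w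

/-- The list of edges of a walk. -/
def Walk.edges {X : Multigraph} : ∀ {u v : X.V}, X.Walk u v → List X.E
  | _, _, .nil _ => []
  | _, _, .cons e _ p => e :: p.edges

/-- The list of vertices of a walk (in order, with repetitions). -/
def Walk.support {X : Multigraph} : ∀ {u v : X.V}, X.Walk u v → List X.V
  | u, _, .nil _ => [u]
  | u, _, .cons _ _ p => u :: p.support

end Multigraph

/-!
The edges `F(M)` of a generalized truncation form a perfect matching whose deletion leaves
the constituents, a simple graph. Conversely, given such a matching `M` of `Y`, contract
every edge outside `M`: the clusters are the components of `Y \ M`, the edges of the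
contracted multigraph `X` are those of `M` (loops where both ends lie in one cluster),
and `Y` is a generalized truncation of `X`.
-/

namespace Multigraph

variable {X Y : Multigraph}

theorem TruncationData.isPerfectMatching_range_emb (T : X.TruncationData Y) :
    Y.IsPerfectMatching (Set.range T.emb) := by
  refine ⟨?_, fun v => ?_⟩
  · rintro _ ⟨e, rfl⟩
    exact T.emb_ne e
  · obtain ⟨e, hve, huniq⟩ := T.matching v
    refine ⟨T.emb e, ⟨⟨e, rfl⟩, hve⟩, ?_⟩
    rintro _ ⟨⟨e', rfl⟩, hve'⟩
    exact congrArg T.emb (huniq e' hve')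

def JoinedOff (Y : Multigraph) (M : Set Y.E) (a b : Y.V) : Prop :=
  ∃ f, f ∉ M ∧ Y.ends f = s(a, b)

def contractOff (Y : Multigraph) (M : Set Y.E) : Multigraph :=
  ⟨Quot (Y.JoinedOff M), M, fun e => (Y.ends e.1).map (Quot.mk _)⟩

theorem isDiag_map_mk_of_notMem {M : Set Y.E} {f : Y.E} (hf : f ∉ M) :
    ((Y.ends f).map (Quot.mk (Y.JoinedOff M))).IsDiag := by
  generalize hab : Y.ends f = s
  induction s using Sym2.ind with
  | _ a b =>
    have hq : Quot.mk (Y.JoinedOff M) a = Quot.mk _ b := Quot.sound ⟨f, hf, hab⟩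
    simp [hq]

def truncationDataContractOff {M : Set Y.E} (hM : Y.IsPerfectMatching M)
    (hsimple : (Y.deleteEdges M).IsSimple) : (Y.contractOff M).TruncationData Y where
  label := Quot.mk _
  emb := Subtype.val
  emb_inj := Subtype.val_injective
  label_surj := Quot.mk_surjective
  ends_map _ := rfl
  emb_ne e := hM.1 e.1 e.2
  matching v := by
    obtain ⟨f, ⟨hfM, hvf⟩, huniq⟩ := hM.2 v
    exact ⟨⟨f, hfM⟩, hvf, fun e hve => Subtype.ext (huniq e.1 ⟨e.2, hve⟩)⟩
  cluster f hf := isDiag_map_mk_of_notMem fun hfM => hf ⟨⟨f, hfM⟩, rfl⟩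
  simple := (Subtype.range_val (s := M)).symm ▸ hsimple

end Multigraph

open Multigraph in
/-- A multigraph `Y` is a generalized truncation of a reflexive multigraph
if and only if `Y` contains a perfect matching `M` such that `Y \ M` is a simple graph. -/
theorem genTruncation_iff_perfectMatching (Y : Multigraph) :
    (∃ X : Multigraph, IsGenTruncation X Y) ↔
      ∃ M : Set Y.E, Y.IsPerfectMatching M ∧ (Y.deleteEdges M).IsSimple := by
  constructor
  · rintro ⟨X, ⟨T⟩⟩
    exact ⟨Set.range T.emb, T.isPerfectMatching_range_emb, T.simple⟩
  · rintro ⟨M, hM, hsimple⟩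
    exact ⟨Y.contractOff M, ⟨truncationDataContractOff hM hsimple⟩⟩
end

section
/- If Y is a graph that is a generalized truncation and whose source set src(Y) has exactly one element, then Y is connected. -/
/-!
Suppose `Y` is a generalized truncation of a loopless `X`. Splitting every cluster along the
components of `Y` gives another loopless source, which is connected only if `Y` is. Choosing a
root vertex in each component and merging, across all components, the clusters that contain a
root gives another loopless source, and this one is always connected: each component reaches its
root cluster. By uniqueness of the source these two are isomorphic, so `Y` is connected.
-/

namespace Multigraph

variable {X X₁ X₂ Y : Multigraph}

theorem Adj.symm {u v : X.V} (h : X.Adj u v) : X.Adj v u :=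
  let ⟨e, he⟩ := h
  ⟨e, he.trans Sym2.eq_swap⟩

instance : Std.Symm X.Adj := ⟨fun _ _ => Adj.symm⟩

theorem Adj.reachable {u v : X.V} (h : X.Adj u v) : X.Reachable u v :=
  .single h

theorem Reachable.symm {u v : X.V} (h : X.Reachable u v) : X.Reachable v u :=
  Std.Symm.symm (r := Relation.ReflTransGen X.Adj) _ _ h

theorem Reachable.trans {u v w : X.V} (h : X.Reachable u v) (h' : X.Reachable v w) :
    X.Reachable u w :=
  Relation.ReflTransGen.trans h h'

def reachableSetoid (X : Multigraph) : Setoid X.V :=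
  ⟨X.Reachable, ⟨fun _ => .refl, Reachable.symm, Reachable.trans⟩⟩

noncomputable def root (X : Multigraph) (a : X.V) : X.V :=
  (Quotient.mk X.reachableSetoid a).out

theorem reachable_root (a : X.V) : X.Reachable a (X.root a) :=
  (Quotient.mk_out (s := X.reachableSetoid) a).symm

theorem Reachable.root_eq {a b : X.V} (h : X.Reachable a b) : X.root a = X.root b :=
  congrArg Quotient.out (Quotient.sound (s := X.reachableSetoid) h)

theorem root_root (a : X.V) : X.root (X.root a) = X.root a :=
  (reachable_root a).symm.root_eq

theorem reachable_of_root_eq {a b : X.V} (h : X.root a = X.root b) : X.Reachable a b :=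
  (reachable_root a).trans (h ▸ (reachable_root b).symm)

theorem Iso.connected (φ : Iso X₁ X₂) (h : X₁.Connected) : X₂.Connected := by
  have hadj : ∀ u v, X₁.Adj u v → X₂.Adj (φ.vEquiv u) (φ.vEquiv v) :=
    fun u v ⟨e, he⟩ => ⟨φ.eEquiv e, by rw [← φ.ends_map, he, Sym2.map_mk]⟩
  intro u v
  have huv := (h (φ.vEquiv.symm u) (φ.vEquiv.symm v)).lift _ hadj
  simp only [Function.onFun, Equiv.apply_symm_apply] at huv
  exact huv

namespace TruncationData

variable (T : X.TruncationData Y)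

theorem label_ne_of_ends_emb (hX : X.Loopless) {e : X.E} {a b : Y.V}
    (hab : Y.ends (T.emb e) = s(a, b)) : T.label a ≠ T.label b := by
  simpa [← T.ends_map e, hab] using hX e

abbrev quotientSource (s : Setoid Y.V) : Multigraph :=
  ⟨Quotient s, X.E, fun e => (Y.ends (T.emb e)).map (Quotient.mk s)⟩

variable {T} {s : Setoid Y.V}

def toQuotientSource (hs : ∀ a b, T.label a = T.label b → Y.Adj a b → s a b) :
    (T.quotientSource s).TruncationData Y where
  label := Quotient.mk s
  emb := T.emb
  emb_inj := T.emb_inj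
  label_surj := Quotient.mk_surjective
  ends_map _ := rfl
  emb_ne := T.emb_ne
  matching := T.matching
  cluster f hf := by
    induction hef : Y.ends f using Sym2.ind with
    | _ a b =>
      have hd := T.cluster f hf
      rw [hef, Sym2.map_mk, Sym2.mk_isDiag_iff] at hd
      rw [Sym2.map_mk, Sym2.mk_isDiag_iff]
      exact Quotient.sound (hs a b hd ⟨f, hef⟩)
  simple := T.simple

theorem quotientSource_loopless (hs : ∀ e a b, Y.ends (T.emb e) = s(a, b) → ¬ s a b) :
    (T.quotientSource s).Loopless := by
  intro e
  induction hab : Y.ends (T.emb e) using Sym2.ind with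
  | _ a b =>
    change ¬ ((Y.ends (T.emb e)).map (Quotient.mk s)).IsDiag
    rw [hab, Sym2.map_mk, Sym2.mk_isDiag_iff]
    exact fun h => hs e a b hab (Quotient.exact h)

theorem reachable_quotientSource_mk (hs : ∀ a b, T.label a = T.label b → Y.Adj a b → s a b)
    {a b : Y.V} (h : Y.Reachable a b) :
    (T.quotientSource s).Reachable (Quotient.mk s a) (Quotient.mk s b) := by
  induction h with
  | refl => exact .refl
  | @tail c d _ hcd ih =>
    obtain ⟨f, hf⟩ := hcd
    by_cases hm : f ∈ Set.range T.emb
    · obtain ⟨e, rfl⟩ := hm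
      exact ih.tail ⟨e, by simp [quotientSource, hf]⟩
    · have hd := T.cluster f hm
      rw [hf, Sym2.map_mk, Sym2.mk_isDiag_iff] at hd
      rwa [← Quotient.sound (hs c d hd ⟨f, hf⟩)]

theorem reachable_of_reachable_quotientSource (hs : ∀ a b, s a b → Y.Reachable a b)
    {p q : Quotient s} (h : (T.quotientSource s).Reachable p q) :
    ∀ a b, Quotient.mk s a = p → Quotient.mk s b = q → Y.Reachable a b := by
  induction h using Relation.ReflTransGen.head_induction_on with
  | refl =>
    intro a b ha hb
    exact hs a b (Quotient.exact (ha.trans hb.symm))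
  | head hadj _ ih =>
    rintro a b rfl rfl
    obtain ⟨e, he⟩ := hadj
    induction hxy : Y.ends (T.emb e) using Sym2.ind with
    | _ x y =>
      have hxy' : Y.Adj x y := ⟨T.emb e, hxy⟩
      change (Y.ends (T.emb e)).map (Quotient.mk s) = _ at he
      rw [hxy, Sym2.map_mk, Sym2.eq_iff] at he
      rcases he with ⟨hx, hy⟩ | ⟨hx, hy⟩
      · exact (hs a x (Quotient.exact hx.symm)).trans (hxy'.reachable.trans (ih y b hy rfl))
      · exact (hs a y (Quotient.exact hy.symm)).trans
          (hxy'.symm.reachable.trans (ih x b hx rfl))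

theorem connected_of_connected_quotientSource (hs : ∀ a b, s a b → Y.Reachable a b)
    (h : (T.quotientSource s).Connected) : Y.Connected :=
  fun a b => reachable_of_reachable_quotientSource hs (h _ _) a b rfl rfl

variable (T)

noncomputable def componentSetoid : Setoid Y.V :=
  Setoid.ker fun a => (T.label a, Y.root a)

open Classical in
/-- The class `none` merges all clusters that contain the root of their component. -/
noncomputable def rootSetoid : Setoid Y.V :=
  Setoid.ker fun a => if T.label a = T.label (Y.root a) then none else some (T.label a, Y.root a)

theorem componentSetoid_of_adj :
    ∀ a b, T.label a = T.label b → Y.Adj a b → T.componentSetoid a b :=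
  fun _ _ hl hab => Setoid.ker_def.2 (by rw [hl, hab.reachable.root_eq])

theorem rootSetoid_of_adj : ∀ a b, T.label a = T.label b → Y.Adj a b → T.rootSetoid a b :=
  fun _ _ hl hab => Setoid.ker_def.2 (by rw [hl, hab.reachable.root_eq])

theorem reachable_of_componentSetoid : ∀ a b, T.componentSetoid a b → Y.Reachable a b :=
  fun _ _ h => reachable_of_root_eq (Prod.ext_iff.1 (Setoid.ker_def.1 h)).2

theorem componentSetoid_loopless (hX : X.Loopless) :
    (T.quotientSource T.componentSetoid).Loopless :=
  quotientSource_loopless fun _ _ _ hab h =>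
    T.label_ne_of_ends_emb hX hab (Prod.ext_iff.1 (Setoid.ker_def.1 h)).1

theorem rootSetoid_loopless (hX : X.Loopless) :
    (T.quotientSource T.rootSetoid).Loopless := by
  refine quotientSource_loopless fun e a b hab h => T.label_ne_of_ends_emb hX hab ?_
  have hroot : Y.root a = Y.root b := (Adj.reachable ⟨_, hab⟩).root_eq
  have h := Setoid.ker_def.1 h
  simp only [hroot] at h
  split_ifs at h with ha hb <;> simp_all

theorem connected_rootSetoid : (T.quotientSource T.rootSetoid).Connected := by
  have reach_root (a : Y.V) := reachable_quotientSource_mk T.rootSetoid_of_adj (reachable_root a)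
  have roots_merged (a b : Y.V) :
      Quotient.mk T.rootSetoid (Y.root a) = Quotient.mk T.rootSetoid (Y.root b) :=
    Quotient.sound (Setoid.ker_def.2 (by simp [root_root]))
  rintro ⟨a⟩ ⟨b⟩
  exact (reach_root a).trans (roots_merged a b ▸ (reach_root b).symm)

end TruncationData

end Multigraph

open Multigraph in
theorem connected_of_unique_source_general (Y : Multigraph)
    (hex : ∃ X : Multigraph, X.Loopless ∧ IsGenTruncation X Y)
    (huniq : ∀ X₁ X₂ : Multigraph, X₁.Loopless → IsGenTruncation X₁ Y →
      X₂.Loopless → IsGenTruncation X₂ Y → Nonempty (Iso X₁ X₂)) :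
    Y.Connected := by
  obtain ⟨X, hX, ⟨T⟩⟩ := hex
  obtain ⟨φ⟩ := huniq _ _
    (T.rootSetoid_loopless hX) ⟨.toQuotientSource T.rootSetoid_of_adj⟩
    (T.componentSetoid_loopless hX) ⟨.toQuotientSource T.componentSetoid_of_adj⟩
  exact TruncationData.connected_of_connected_quotientSource T.reachable_of_componentSetoid
    (φ.connected T.connected_rootSetoid)

open Multigraph in
/-- If a graph `Y` is a generalized truncation whose source set `src(Y)`
(the loopless multigraphs having `Y` as generalized truncation, up to isomorphism)
has exactly one element, then `Y` is connected. -/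
theorem connected_of_unique_source (Y : Multigraph) (hY : Y.IsSimple)
    (hex : ∃ X : Multigraph, X.Loopless ∧ IsGenTruncation X Y)
    (huniq : ∀ X₁ X₂ : Multigraph, X₁.Loopless → IsGenTruncation X₁ Y →
      X₂.Loopless → IsGenTruncation X₂ Y → Nonempty (Iso X₁ X₂)) :
    Y.Connected :=
  connected_of_unique_source_general Y hex huniq
end

section
/- If Y is a generalized truncation graph with a unique source X (i.e., |src(Y)| = 1), then X is a complete multigraph, meaning every pair of distinct vertices of X is joined by at least one edge. -/
namespace Multigraph

variable {X Y : Multigraph}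

def IsComplete (X : Multigraph) : Prop := ∀ u v : X.V, u ≠ v → X.Adj u v

/-- Reducible, so that instance search sees `(X.map f).V` as `W`. -/
abbrev map (X : Multigraph) {W : Type} (f : X.V → W) : Multigraph :=
  ⟨W, X.E, fun e => (X.ends e).map f⟩

lemma map_map {W W' : Type} (f : X.V → W) (g : W → W') : (X.map f).map g = X.map (g ∘ f) := by
  simp only [map, Sym2.map_map]

lemma loopless_map_iff {W : Type} (f : X.V → W) :
    (X.map f).Loopless ↔ ∀ e a b, X.ends e = s(a, b) → f a ≠ f b := by
  refine ⟨fun h e a b he hab => h e ?_, fun h e => ?_⟩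
  · simp only [map, he, Sym2.map_mk, Sym2.mk_isDiag_iff, hab]
  · obtain ⟨⟨a, b⟩, hab⟩ := Quot.exists_rep (X.ends e)
    simpa only [map, ← hab, Sym2.map_mk, Sym2.mk_isDiag_iff] using h e a b hab.symm

lemma loopless_map_mk_ker_iff {W : Type} (f : X.V → W) :
    (X.map (Quotient.mk (Setoid.ker f))).Loopless ↔ (X.map f).Loopless := by
  simp only [loopless_map_iff, ne_eq, Quotient.eq, Setoid.ker_def]

lemma Loopless.map_update_id [DecidableEq X.V] (hX : X.Loopless) {u v : X.V}
    (huv : ¬ X.Adj u v) : (X.map (Function.update id v u)).Loopless := by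
  rw [loopless_map_iff]
  intro e a b he
  have hab : a ≠ b := fun h => hX e (by rw [he, h]; exact Sym2.mk_isDiag_iff.mpr rfl)
  have hvu : ¬ X.Adj v u := fun ⟨e, he⟩ => huv ⟨e, he.trans Sym2.eq_swap⟩
  by_cases ha : a = v <;> by_cases hb : b = v <;>
    simp only [Function.update_apply, ha, hb, if_true, if_false, id_eq]
  · exact absurd (ha.trans hb.symm) hab
  · rintro rfl; exact hvu ⟨e, ha ▸ he⟩
  · rintro rfl; exact huv ⟨e, hb ▸ he⟩
  · exact hab

lemma Iso.isComplete (φ : Iso X Y) (hY : Y.IsComplete) : X.IsComplete := by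
  intro u v huv
  obtain ⟨e, he⟩ := hY _ _ (φ.vEquiv.injective.ne huv)
  refine ⟨φ.eEquiv.symm e, Sym2.map.injective φ.vEquiv.injective ?_⟩
  rw [φ.ends_map, Equiv.apply_symm_apply, he, Sym2.map_mk]

def TruncationData.map (T : TruncationData X Y) {W : Type} (f : X.V → W)
    (hf : Function.Surjective f) : TruncationData (X.map f) Y where
  label := f ∘ T.label
  emb := T.emb
  emb_inj := T.emb_inj
  label_surj := hf.comp T.label_surj
  ends_map e := by rw [← Sym2.map_map, T.ends_map]
  emb_ne := T.emb_ne
  matching := T.matching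
  cluster f' hf' := by rw [← Sym2.map_map]; exact (T.cluster f' hf').map
  simple := T.simple

lemma IsGenTruncation.map (hT : IsGenTruncation X Y) {W : Type} {f : X.V → W}
    (hf : Function.Surjective f) : IsGenTruncation (X.map f) Y :=
  hT.elim fun T => ⟨T.map f hf⟩

def looplessQuotients (X : Multigraph) : Set (Setoid X.V) :=
  {s | (X.map (Quotient.mk s)).Loopless}

lemma mem_looplessQuotients_iff {s : Setoid X.V} :
    s ∈ X.looplessQuotients ↔ ∀ e a b, X.ends e = s(a, b) → ¬ s a b := by
  simp only [looplessQuotients, Set.mem_ofPred_eq, loopless_map_iff, ne_eq, Quotient.eq]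

lemma bot_mem_looplessQuotients (hX : X.Loopless) : ⊥ ∈ X.looplessQuotients :=
  mem_looplessQuotients_iff.2 fun e a b he hab =>
    hX e (by rw [he, Sym2.mk_isDiag_iff]; simpa only [Setoid.bot_def] using hab)

lemma exists_ub_looplessQuotients_of_isChain {c : Set (Setoid X.V)} (hcS : c ⊆ X.looplessQuotients)
    (hc : IsChain (· ≤ ·) c) {s₀ : Setoid X.V} (hs₀ : s₀ ∈ c) :
    ∃ t ∈ X.looplessQuotients, ∀ s ∈ c, s ≤ t := by
  let t : Setoid X.V :=
    { r := fun a b => ∃ s ∈ c, s a b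
      iseqv :=
        { refl := fun a => ⟨s₀, hs₀, s₀.refl a⟩
          symm := fun ⟨s, hs, hab⟩ => ⟨s, hs, s.symm hab⟩
          trans := fun ⟨s, hs, hab⟩ ⟨s', hs', hbc⟩ => by
            rcases hc.total hs hs' with h | h
            · exact ⟨s', hs', s'.trans (h hab) hbc⟩
            · exact ⟨s, hs, s.trans hab (h hbc)⟩ } }
  refine ⟨t, mem_looplessQuotients_iff.2 ?_, fun s hs a b hab => ⟨s, hs, hab⟩⟩
  rintro e a b he ⟨s, hs, hab⟩
  exact mem_looplessQuotients_iff.1 (hcS hs) e a b he hab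

lemma exists_maximal_looplessQuotients (hX : X.Loopless) :
    ∃ s, Maximal (· ∈ X.looplessQuotients) s :=
  (zorn_le_nonempty₀ _ (fun _ hcS hc _ hs => exists_ub_looplessQuotients_of_isChain hcS hc hs) ⊥
    (bot_mem_looplessQuotients hX)).imp fun _ => And.right

lemma isComplete_map_mk_of_maximal {s : Setoid X.V}
    (hs : Maximal (· ∈ X.looplessQuotients) s) : (X.map (Quotient.mk s)).IsComplete := by
  classical
  intro (c : Quotient s) (d : Quotient s) hcd
  by_contra hadj
  have hf : Setoid.ker (Function.update id d c ∘ Quotient.mk s) ∈ X.looplessQuotients := by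
    rw [looplessQuotients, Set.mem_ofPred_eq, loopless_map_mk_ker_iff, ← map_map]
    exact hs.1.map_update_id hadj
  have hsf : s ≤ Setoid.ker (Function.update id d c ∘ Quotient.mk s) := fun _ _ hab =>
    congrArg (Function.update id d c) (Quotient.sound hab)
  obtain ⟨a, rfl⟩ := Quotient.mk_surjective c
  obtain ⟨b, rfl⟩ := Quotient.mk_surjective d
  refine hcd (Quotient.sound (hs.2 hf hsf ?_))
  simp [Setoid.ker_def, Function.update_apply]

end Multigraph

open Multigraph in
theorem source_complete_of_unique_source_general (Y X : Multigraph) (hX : X.Loopless)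
    (hT : IsGenTruncation X Y)
    (huniq : ∀ X₁ X₂ : Multigraph, X₁.Loopless → IsGenTruncation X₁ Y →
      X₂.Loopless → IsGenTruncation X₂ Y → Nonempty (Iso X₁ X₂)) :
    ∀ u v : X.V, u ≠ v → X.Adj u v := by
  obtain ⟨s, hs⟩ := exists_maximal_looplessQuotients hX
  obtain ⟨φ⟩ := huniq X _ hX hT hs.1 (hT.map Quotient.mk_surjective)
  exact φ.isComplete (isComplete_map_mk_of_maximal hs)

open Multigraph in
/-- If a graph `Y` is a generalized truncation with a unique source `X`
(up to isomorphism), then `X` is a complete multigraph: every pair of distinct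
vertices of `X` is joined by at least one edge. -/
theorem source_complete_of_unique_source (Y X : Multigraph) (hY : Y.IsSimple)
    (hX : X.Loopless) (hT : IsGenTruncation X Y)
    (huniq : ∀ X₁ X₂ : Multigraph, X₁.Loopless → IsGenTruncation X₁ Y →
      X₂.Loopless → IsGenTruncation X₂ Y → Nonempty (Iso X₁ X₂)) :
    ∀ u v : X.V, u ≠ v → X.Adj u v :=
  source_complete_of_unique_source_general Y X hX hT huniq
end

section
/- If Y is a generalized truncation of a multigraph X, then the edge connectivity of Y is at most the edge connectivity of X. -/
namespace Multigraph

/-- The edge connectivity of a multigraph: the least cardinality of a set of edges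
whose deletion disconnects the multigraph (`⊤` if no such set exists). -/
noncomputable def edgeConnectivity (X : Multigraph) : ℕ∞ :=
  ⨅ S : {S : Set X.E // ¬ (X.deleteEdges S).Connected}, (S.1.encard)

end Multigraph

namespace Multigraph

variable {X Y : Multigraph}

theorem Reachable.map (f : Y.V → X.V)
    (hf : ∀ u v, Y.Adj u v → f u = f v ∨ X.Adj (f u) (f v)) {u v : Y.V}
    (huv : Y.Reachable u v) : X.Reachable (f u) (f v) :=
  Relation.ReflTransGen.lift' f
    (fun a b hab => (hf a b hab).elim (fun h => by simp only [Function.onFun, h]; rfl) .single)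
    u v huv

theorem Connected.of_surjective_map (f : Y.V → X.V) (hsurj : Function.Surjective f)
    (hf : ∀ u v, Y.Adj u v → f u = f v ∨ X.Adj (f u) (f v)) (hY : Y.Connected) :
    X.Connected := by
  intro u v
  obtain ⟨u, rfl⟩ := hsurj u
  obtain ⟨v, rfl⟩ := hsurj v
  exact (hY u v).map f hf

namespace TruncationData

theorem adj_deleteEdges_image (T : X.TruncationData Y) (S : Set X.E) {u v : Y.V}
    (huv : (Y.deleteEdges (T.emb '' S)).Adj u v) :
    T.label u = T.label v ∨ (X.deleteEdges S).Adj (T.label u) (T.label v) := by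
  obtain ⟨⟨f, hfS⟩, hf⟩ := huv
  change Y.ends f = s(u, v) at hf
  by_cases hrange : f ∈ Set.range T.emb
  · obtain ⟨e, rfl⟩ := hrange
    refine .inr ⟨⟨e, fun he => hfS ⟨e, he, rfl⟩⟩, ?_⟩
    change X.ends e = _
    rw [← T.ends_map e, hf]
    rfl
  · have hdiag := T.cluster f hrange
    rw [hf, Sym2.map_mk, Sym2.mk_isDiag_iff] at hdiag
    exact .inl hdiag

theorem connected_of_connected_deleteEdges_image (T : X.TruncationData Y) (S : Set X.E)
    (hY : (Y.deleteEdges (T.emb '' S)).Connected) : (X.deleteEdges S).Connected :=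
  Connected.of_surjective_map (X := X.deleteEdges S) (Y := Y.deleteEdges (T.emb '' S))
    T.label T.label_surj (fun _ _ => T.adj_deleteEdges_image S) hY

end TruncationData

end Multigraph

open Multigraph in
theorem edgeConnectivity_truncation_le_general (X Y : Multigraph)
    (hT : IsGenTruncation X Y) :
    Y.edgeConnectivity ≤ X.edgeConnectivity := by
  obtain ⟨T⟩ := hT
  refine le_iInf fun ⟨S, hS⟩ => ?_
  have hYS : ¬ (Y.deleteEdges (T.emb '' S)).Connected :=
    mt (T.connected_of_connected_deleteEdges_image S) hS
  calc Y.edgeConnectivity ≤ (T.emb '' S).encard := iInf_le_of_le ⟨_, hYS⟩ le_rfl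
    _ = S.encard := T.emb_inj.injOn.encard_image

open Multigraph in
/-- If `Y` is a generalized truncation of a multigraph `X`, then
`κ'(Y) ≤ κ'(X)`. -/
theorem edgeConnectivity_truncation_le (X Y : Multigraph) (hX : X.Loopless)
    (hT : IsGenTruncation X Y) :
    Y.edgeConnectivity ≤ X.edgeConnectivity :=
  edgeConnectivity_truncation_le_general X Y hT
end

section
/- If X is a k-edge-connected multigraph with k ≥ 2, then every complete generalized truncation of X is k-edge-connected. -/
namespace Multigraph

/-- A multigraph is `k`-edge-connected if it remains connected after deletion of any
fewer than `k` edges. -/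
def EdgeConnectedGE (X : Multigraph) (k : ℕ) : Prop :=
  ∀ S : Set X.E, S.encard < (k : ℕ∞) → (X.deleteEdges S).Connected

end Multigraph


/-!
To show that a cut `δ(A)` of the truncation `Y` has at least `k` edges, choose a proper nonempty set
`B` of vertices of `X` such that every cluster labelled in `B` meets the complement of `A` and every
cluster labelled outside `B` meets `A`. Charge each edge `e ∈ δ(B)` to an edge of `δ(A)`: to its
matching edge if that crosses `A`; if both ends of the matching edge lie in `A`, to a constituent
edge joining the end labelled in `B` to a vertex of its cluster outside `A`; if both lie outside
`A`, to a constituent edge joining the end labelled outside `B` to a vertex of its cluster in `A`.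
Completeness of the constituents provides these edges, and the charging is injective, so
`k ≤ |δ(B)| ≤ |δ(A)|`.
-/

theorem Function.Surjective.exists_nonempty_compl_nonempty_subset_image {α β : Type*}
    [Nontrivial β] {f : α → β} (hf : Function.Surjective f) {s : Set α} {a b : α}
    (ha : a ∈ s) (hb : b ∉ s) :
    ∃ t : Set β, t.Nonempty ∧ tᶜ.Nonempty ∧ t ⊆ f '' sᶜ ∧ tᶜ ⊆ f '' s := by
  by_cases himage : f '' sᶜ = Set.univ
  · by_cases himage' : f '' s = Set.univ
    · obtain ⟨p, q, hpq⟩ := exists_pair_ne β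
      exact ⟨{p}, Set.singleton_nonempty p, ⟨q, hpq.symm⟩, by simp [himage], by simp [himage']⟩
    · refine ⟨(f '' s)ᶜ, Set.nonempty_compl.2 himage', ⟨f a, by simpa using ⟨a, ha, rfl⟩⟩,
        by simp [himage], by simp⟩
  · refine ⟨f '' sᶜ, ⟨f b, b, hb, rfl⟩, Set.nonempty_compl.2 himage, subset_rfl, fun y hy => ?_⟩
    obtain ⟨x, rfl⟩ := hf y
    exact ⟨x, not_not.1 fun hx => hy ⟨x, hx, rfl⟩, rfl⟩

namespace Multigraph

def cut (X : Multigraph) (A : Set X.V) : Set X.E :=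
  {e | ∃ a b, X.ends e = s(a, b) ∧ a ∈ A ∧ b ∉ A}

variable {X : Multigraph}

theorem Loopless.nontrivial (hX : X.Loopless) (e : X.E) : Nontrivial X.V := by
  by_contra h
  rw [not_nontrivial_iff_subsingleton] at h
  exact hX e (Sym2.isDiag_of_subsingleton _)

theorem mem_of_reachable_of_cut_subset {S : Set X.E} {A : Set X.V} (hA : X.cut A ⊆ S)
    {a b : X.V} (ha : a ∈ A) (hab : (X.deleteEdges S).Reachable a b) : b ∈ A := by
  induction hab with
  | refl => exact ha
  | tail _ hadj ih =>
    obtain ⟨⟨e, he⟩, hends⟩ := hadj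
    by_contra hb
    exact he (hA ⟨_, _, hends, ih, hb⟩)

theorem cut_setOf_reachable_subset (S : Set X.E) (a : X.V) :
    X.cut {b | (X.deleteEdges S).Reachable a b} ⊆ S := by
  rintro e ⟨x, y, hxy, hx, hy⟩
  by_contra he
  exact hy (hx.tail ⟨⟨e, he⟩, hxy⟩)

theorem edgeConnectedGE_iff_le_encard_cut {k : ℕ} :
    X.EdgeConnectedGE k ↔ ∀ A : Set X.V, ∀ a ∈ A, ∀ b ∉ A, (k : ℕ∞) ≤ (X.cut A).encard := by
  constructor
  · intro h A a ha b hb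
    by_contra! hlt
    exact hb (mem_of_reachable_of_cut_subset subset_rfl ha (h _ hlt a b))
  · intro h S hS a b
    by_contra hab
    exact (h _ a Relation.ReflTransGen.refl b hab).not_gt
      ((Set.encard_le_encard (cut_setOf_reachable_subset S a)).trans_lt hS)

namespace TruncationData

variable {Y : Multigraph} (T : TruncationData X Y)

theorem eq_of_mem_ends_emb {y : Y.V} {e₁ e₂ : X.E} (h₁ : y ∈ Y.ends (T.emb e₁))
    (h₂ : y ∈ Y.ends (T.emb e₂)) : e₁ = e₂ :=
  (T.matching y).unique h₁ h₂

theorem label_eq_of_notMem_range {f : Y.E} (hf : f ∉ Set.range T.emb) {a b : Y.V}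
    (hab : Y.ends f = s(a, b)) : T.label a = T.label b := by
  simpa [hab] using T.cluster f hf

theorem exists_ends_emb {e : X.E} {p q : X.V} (he : X.ends e = s(p, q)) :
    ∃ y z, Y.ends (T.emb e) = s(y, z) ∧ T.label y = p ∧ T.label z = q := by
  have hmap := T.ends_map e
  generalize Y.ends (T.emb e) = w at hmap ⊢
  induction w using Sym2.ind with
  | _ y z =>
    rw [Sym2.map_mk, he, Sym2.eq_iff] at hmap
    rcases hmap with ⟨rfl, rfl⟩ | ⟨rfl, rfl⟩
    · exact ⟨y, z, rfl, rfl, rfl⟩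
    · exact ⟨z, y, Sym2.eq_swap, rfl, rfl⟩

theorem exists_mem_cut_of_label_eq (hcomp : T.Complete) {A : Set Y.V} {x y : Y.V} (hx : x ∈ A)
    (hy : y ∉ A) (hxy : T.label x = T.label y) :
    ∃ f ∉ Set.range T.emb, f ∈ Y.cut A ∧ Y.ends f = s(x, y) := by
  obtain ⟨f, hf, hends⟩ := hcomp x y (ne_of_mem_of_not_mem hx hy) hxy
  exact ⟨f, hf, ⟨x, y, hends, hx, hy⟩, hends⟩

def Charges (A : Set Y.V) (B : Set X.V) (e : X.E) (f : Y.E) : Prop :=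
  f = T.emb e ∨
    f ∉ Set.range T.emb ∧ ∃ y ∈ Y.ends (T.emb e), y ∈ Y.ends f ∧ (y ∈ A ↔ T.label y ∈ B)

theorem exists_charges (hcomp : T.Complete) {A : Set Y.V} {B : Set X.V}
    (hB : B ⊆ T.label '' Aᶜ) (hBc : Bᶜ ⊆ T.label '' A) {e : X.E} (he : e ∈ X.cut B) :
    ∃ f ∈ Y.cut A, T.Charges A B e f := by
  obtain ⟨p, q, hpq, hp, hq⟩ := he
  obtain ⟨y, z, hyz, rfl, rfl⟩ := T.exists_ends_emb hpq
  by_cases hy : y ∈ A <;> by_cases hz : z ∈ A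
  · obtain ⟨b, hb, hlb⟩ := hB hp
    obtain ⟨f, hf, hcut, hends⟩ := T.exists_mem_cut_of_label_eq hcomp hy hb hlb.symm
    exact ⟨f, hcut, .inr ⟨hf, y, by simp [hyz], by simp [hends], iff_of_true hy hp⟩⟩
  · exact ⟨_, ⟨y, z, hyz, hy, hz⟩, .inl rfl⟩
  · exact ⟨_, ⟨z, y, hyz.trans Sym2.eq_swap, hz, hy⟩, .inl rfl⟩
  · obtain ⟨a, ha, hla⟩ := hBc hq
    obtain ⟨f, hf, hcut, hends⟩ := T.exists_mem_cut_of_label_eq hcomp ha hz hla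
    exact ⟨f, hcut, .inr ⟨hf, z, by simp [hyz], by simp [hends], iff_of_false hz hq⟩⟩

theorem eq_of_charges {A : Set Y.V} {B : Set X.V} {e₁ e₂ : X.E} {f : Y.E} (hf : f ∈ Y.cut A)
    (h₁ : T.Charges A B e₁ f) (h₂ : T.Charges A B e₂ f) : e₁ = e₂ := by
  rcases h₁ with rfl | ⟨hf₁, y₁, hy₁, hy₁f, hy₁A⟩ <;>
    rcases h₂ with h₂ | ⟨hf₂, y₂, hy₂, hy₂f, hy₂A⟩
  · exact T.emb_inj h₂
  · exact absurd ⟨e₁, rfl⟩ hf₂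
  · exact absurd ⟨e₂, h₂.symm⟩ hf₁
  · obtain ⟨a, b, hab, ha, hb⟩ := hf
    have hlab := T.label_eq_of_notMem_range hf₁ hab
    have hy : y₁ = y₂ := by
      rw [hab, Sym2.mem_iff] at hy₁f hy₂f
      rcases hy₁f with rfl | rfl <;> rcases hy₂f with rfl | rfl <;> simp_all
    exact T.eq_of_mem_ends_emb hy₁ (hy ▸ hy₂)

theorem encard_cut_le_encard_cut (hcomp : T.Complete) {A : Set Y.V} {B : Set X.V}
    (hB : B ⊆ T.label '' Aᶜ) (hBc : Bᶜ ⊆ T.label '' A) :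
    (X.cut B).encard ≤ (Y.cut A).encard := by
  have hcharge : ∀ e ∈ X.cut B, ∃ f ∈ Y.cut A, T.Charges A B e f :=
    fun _ he => T.exists_charges hcomp hB hBc he
  choose g hg hcharges using hcharge
  exact ENat.card_le_card_of_injective (f := fun e : X.cut B => ⟨g e e.2, hg e e.2⟩)
    fun e₁ e₂ h => Subtype.ext <| T.eq_of_charges (hg e₁ e₁.2) (hcharges e₁ e₁.2)
      (Subtype.mk.inj h ▸ hcharges e₂ e₂.2)

end TruncationData

end Multigraph

open Multigraph in
theorem complete_truncation_edgeConnected_general (X Y : Multigraph) (hX : X.Loopless)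
    (k : ℕ) (hXk : X.EdgeConnectedGE k)
    (T : TruncationData X Y) (hcomp : T.Complete) :
    Y.EdgeConnectedGE k := by
  rw [edgeConnectedGE_iff_le_encard_cut] at hXk ⊢
  intro A a ha b hb
  obtain ⟨e, -⟩ := T.matching a
  have := hX.nontrivial e
  obtain ⟨B, ⟨p, hp⟩, ⟨q, hq⟩, hB, hBc⟩ :=
    T.label_surj.exists_nonempty_compl_nonempty_subset_image ha hb
  exact (hXk B p hp q hq).trans (T.encard_cut_le_encard_cut hcomp hB hBc)

open Multigraph in
/-- If `X` is a `k`-edge-connected multigraph with `k ≥ 2`, then every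
complete generalized truncation of `X` is `k`-edge-connected. -/
theorem complete_truncation_edgeConnected (X Y : Multigraph) (hX : X.Loopless)
    (k : ℕ) (hk : 2 ≤ k) (hXk : X.EdgeConnectedGE k)
    (T : TruncationData X Y) (hcomp : T.Complete) :
    Y.EdgeConnectedGE k :=
  complete_truncation_edgeConnected_general X Y hX k hXk T hcomp
end

section
/- Let Y be a generalized truncation of the complete graph K_n with n > 3. If every constituent graph of Y is Hamilton-connected, then Y is Hamilton-connected. -/
namespace Multigraph

/-- The complete graph `K n` as a multigraph. -/
def completeGraph (n : ℕ) : Multigraph :=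
  ⟨Fin n, {p : Sym2 (Fin n) // ¬ p.IsDiag}, Subtype.val⟩

/-- A multigraph is Hamilton-connected if every two distinct vertices are joined by a
spanning path. -/
def HamiltonConnected (Y : Multigraph) : Prop :=
  ∀ x y : Y.V, x ≠ y → ∃ p : Y.Walk x y, p.support.Nodup ∧ ∀ w : Y.V, w ∈ p.support

end Multigraph

/-!
Every vertex of `Y` is an end, in some cluster `a`, of the matching edge towards another
cluster `b`: it is the port `port a b`. Since the constituents are Hamilton-connected, a Hamilton
path of `Y` can be threaded through a sequence of clusters, entering each at one port, traversing
it completely and leaving through another port towards the next cluster.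

For `x`, `y` in one cluster `a`, let `m` be the successor of `x` on a Hamilton path of `a` from `x`
to `y`: leave `a` at `x`, tour all other clusters, re-enter `a` at `m` and follow the path to `y`.
For `x`, `y` in clusters `u ≠ v`, tour `u`, the `n - 2 ≥ 2` remaining clusters and `v`; an order
of the middle clusters whose first and last ones avoid the clusters into which `x` and `y` are
matched exists unless `n = 4` and `x`, `y` are matched into the same cluster `w`. In that case the
cluster `v` is a triangle, hence `port v u` is adjacent to `port v z` for the fourth cluster `z`,
and `x ⇝ port u v → port v u → port v z → port z v ⇝ port z w → port w z ⇝ port w v → y`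
is a Hamilton path.
-/

lemma Finset.exists_distinct_avoiding {α : Type*} [DecidableEq α] {S : Finset α} (p q : α)
    (hS : 1 < S.card) (h : p = q → 2 < S.card) :
    ∃ c ∈ S, ∃ d ∈ S, c ≠ d ∧ c ≠ p ∧ d ≠ q := by
  by_cases hq : q ∈ S ∧ q ≠ p
  · obtain ⟨d, hd, hdq⟩ := S.exists_mem_ne hS q
    exact ⟨q, hq.1, d, hd, hdq.symm, hq.2, hdq⟩
  obtain ⟨c, hc, hcp⟩ := S.exists_mem_ne hS p
  have hcard : 1 < (S.erase q).card := by
    by_cases hqS : q ∈ S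
    · have := h (not_and_not_right.1 hq hqS).symm
      rw [Finset.card_erase_of_mem hqS]
      omega
    · rwa [Finset.erase_eq_of_notMem hqS]
  obtain ⟨d, hd, hdc⟩ := (S.erase q).exists_mem_ne hcard c
  exact ⟨c, hc, d, Finset.mem_of_mem_erase hd, hdc.symm, hcp, Finset.ne_of_mem_erase hd⟩

namespace Multigraph

variable {X : Multigraph}

namespace Walk

def append : ∀ {u v w : X.V}, X.Walk u v → X.Walk v w → X.Walk u w
  | _, _, _, .nil _, q => q
  | _, _, _, .cons e h p, q => .cons e h (p.append q)

lemma start_mem_support {u v : X.V} (p : X.Walk u v) : u ∈ p.support := by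
  cases p <;> simp [support]

lemma end_mem_support {u v : X.V} (p : X.Walk u v) : v ∈ p.support := by
  induction p with
  | nil => simp [support]
  | cons e h p ih => simp [support, ih]

lemma support_append_cons {u v v' w : X.V} (p : X.Walk u v) {e : X.E}
    (h : X.ends e = s(v, v')) (q : X.Walk v' w) :
    (p.append (.cons e h q)).support = p.support ++ q.support := by
  induction p with
  | nil => rfl
  | cons e' h' p ih => simp [append, support, ih]

end Walk

def HasPathOn (X : Multigraph) (A : Set X.V) (u v : X.V) : Prop :=
  ∃ p : X.Walk u v, p.support.Nodup ∧ ∀ w, w ∈ p.support ↔ w ∈ A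

lemma hamiltonConnected_iff :
    X.HamiltonConnected ↔ ∀ x y, x ≠ y → X.HasPathOn Set.univ x y := by
  simp [HamiltonConnected, HasPathOn]

namespace HasPathOn

variable {A B : Set X.V} {u v v' w : X.V}

lemma singleton (v : X.V) : X.HasPathOn {v} v v :=
  ⟨.nil v, List.nodup_singleton v, by simp [Walk.support]⟩

lemma left_mem (h : X.HasPathOn A u v) : u ∈ A := by
  obtain ⟨p, -, hpA⟩ := h
  exact (hpA u).1 p.start_mem_support

lemma join (h₁ : X.HasPathOn A u v) (h₂ : X.HasPathOn B v' w) (hAB : Disjoint A B)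
    (hadj : X.Adj v v') : X.HasPathOn (A ∪ B) u w := by
  obtain ⟨p, hp, hpA⟩ := h₁
  obtain ⟨q, hq, hqB⟩ := h₂
  obtain ⟨e, he⟩ := hadj
  refine ⟨p.append (.cons e he q), ?_, fun z => ?_⟩ <;> rw [Walk.support_append_cons]
  · exact hp.append hq fun z hzp hzq => Set.disjoint_left.1 hAB ((hpA z).1 hzp) ((hqB z).1 hzq)
  · simp [hpA, hqB]

lemma eq_singleton_of_loop (h : X.HasPathOn A v v) : A = {v} := by
  obtain ⟨p, hp, hpA⟩ := h
  cases p with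
  | nil => ext w; simp [← hpA, Walk.support]
  | cons e he q => exact absurd q.end_mem_support (List.nodup_cons.1 hp).1

lemma exists_adj_of_ne (h : X.HasPathOn A u v) (huv : u ≠ v) :
    ∃ m, X.Adj u m ∧ X.HasPathOn (A \ {u}) m v := by
  obtain ⟨p, hp, hpA⟩ := h
  cases p with
  | nil => exact absurd rfl huv
  | cons e he q =>
    rw [Walk.support, List.nodup_cons] at hp
    refine ⟨_, ⟨e, he⟩, q, hp.2, fun w => ?_⟩
    rw [Set.mem_sdiff, Set.mem_singleton_iff, ← hpA, Walk.support, List.mem_cons]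
    constructor
    · intro hw
      exact ⟨Or.inr hw, by rintro rfl; exact hp.1 hw⟩
    · rintro ⟨hw | hw, hwu⟩
      exacts [absurd hw hwu, hw]

lemma adj_of_subset_triple {a b c : X.V} (h : X.HasPathOn A a c) (hb : b ∈ A)
    (hA : A ⊆ {a, b, c}) (hab : a ≠ b) (hbc : b ≠ c) : X.Adj a b := by
  have hac : a ≠ c := by
    rintro rfl
    rw [h.eq_singleton_of_loop, Set.mem_singleton_iff] at hb
    exact hab hb.symm
  obtain ⟨m, ham, hm⟩ := h.exists_adj_of_ne hac
  have hmA := hm.left_mem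
  rcases hA hmA.1 with hma | hmb | hmc
  · exact absurd hma hmA.2
  · exact hmb ▸ ham
  · subst hmc
    have hb' : b ∈ A \ {a} := ⟨hb, hab.symm⟩
    rw [hm.eq_singleton_of_loop] at hb'
    exact absurd hb' hbc

end HasPathOn

-- `(completeGraph n).V` is `Fin n` only after unfolding, so instance search needs these.
instance (n : ℕ) : Fintype (completeGraph n).V := inferInstanceAs (Fintype (Fin n))

instance (n : ℕ) : DecidableEq (completeGraph n).V := inferInstanceAs (DecidableEq (Fin n))

lemma card_completeGraph_V (n : ℕ) : Fintype.card (completeGraph n).V = n := Fintype.card_fin n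

lemma completeGraph_four_exists_fourth (a b c : (completeGraph 4).V) (hab : a ≠ b)
    (hac : a ≠ c) (hbc : b ≠ c) :
    ∃ d, d ≠ a ∧ d ≠ b ∧ d ≠ c ∧ ∀ e, e = a ∨ e = b ∨ e = c ∨ e = d := by
  revert a b c
  decide

namespace TruncationData

section General

variable {Y : Multigraph} (T : TruncationData X Y)

noncomputable def matchEdge (z : Y.V) : X.E := (T.matching z).exists.choose

lemma mem_ends_matchEdge (z : Y.V) : z ∈ Y.ends (T.emb (T.matchEdge z)) :=
  (T.matching z).exists.choose_spec

lemma matchEdge_eq_of_mem {z : Y.V} {e : X.E} (h : z ∈ Y.ends (T.emb e)) :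
    T.matchEdge z = e :=
  (T.matching z).unique (T.mem_ends_matchEdge z) h

noncomputable def partner (z : Y.V) : Y.V := Sym2.Mem.other (T.mem_ends_matchEdge z)

lemma ends_emb_matchEdge (z : Y.V) : Y.ends (T.emb (T.matchEdge z)) = s(z, T.partner z) :=
  (Sym2.other_spec _).symm

lemma adj_partner (z : Y.V) : Y.Adj z (T.partner z) := ⟨_, T.ends_emb_matchEdge z⟩

lemma partner_partner (z : Y.V) : T.partner (T.partner z) = z := by
  have h := T.ends_emb_matchEdge (T.partner z)
  rw [T.matchEdge_eq_of_mem (by rw [T.ends_emb_matchEdge]; exact Sym2.mem_mk_right _ _),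
    T.ends_emb_matchEdge, Sym2.eq_swap] at h
  exact (Sym2.congr_right.1 h).symm

/-- The cluster into which `z` is matched. -/
noncomputable def co (z : Y.V) : X.V := T.label (T.partner z)

lemma co_partner (z : Y.V) : T.co (T.partner z) = T.label z := by
  rw [co, partner_partner]

lemma ends_matchEdge (z : Y.V) : X.ends (T.matchEdge z) = s(T.label z, T.co z) := by
  rw [← T.ends_map, T.ends_emb_matchEdge, Sym2.map_mk, co]

def ConstituentsHamiltonConnected : Prop :=
  ∀ v : X.V, ∀ x y : Y.V, T.label x = v → T.label y = v → x ≠ y →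
    ∃ p : Y.Walk x y, (∀ f ∈ p.edges, f ∉ Set.range T.emb) ∧ p.support.Nodup ∧
      ∀ w : Y.V, T.label w = v → w ∈ p.support

lemma label_eq_of_mem_support {s t : Y.V} (p : Y.Walk s t)
    (hp : ∀ f ∈ p.edges, f ∉ Set.range T.emb) {z : Y.V} (hz : z ∈ p.support) :
    T.label z = T.label s := by
  induction p with
  | nil => rw [Walk.support, List.mem_singleton] at hz; rw [hz]
  | cons e h p ih =>
    rw [Walk.support, List.mem_cons] at hz
    rcases hz with rfl | hz
    · rfl
    have hdiag := T.cluster e (hp e (by simp [Walk.edges]))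
    rw [h, Sym2.map_mk, Sym2.mk_isDiag_iff] at hdiag
    rw [ih (fun f hf => hp f (by simp [Walk.edges, hf])) hz, hdiag]

lemma hasPathOn_cluster (hcon : T.ConstituentsHamiltonConnected) {a : X.V} {x y : Y.V}
    (hx : T.label x = a) (hy : T.label y = a) (hxy : x ≠ y) :
    Y.HasPathOn (T.label ⁻¹' {a}) x y := by
  obtain ⟨p, hedges, hnd, hcov⟩ := hcon a x y hx hy hxy
  exact ⟨p, hnd, fun z =>
    ⟨fun hz => (T.label_eq_of_mem_support p hedges hz).trans hx, hcov z⟩⟩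

end General

variable {n : ℕ} {Y : Multigraph} (T : TruncationData (completeGraph n) Y)

lemma co_ne_label (z : Y.V) : T.co z ≠ T.label z := by
  intro h
  apply (T.matchEdge z).property
  change (completeGraph n).ends (T.matchEdge z) |>.IsDiag
  rw [T.ends_matchEdge, h, Sym2.mk_isDiag_iff]

lemma eq_of_label_eq_of_co_eq {z z' : Y.V} (hl : T.label z = T.label z')
    (hc : T.co z = T.co z') : z = z' := by
  have he : T.matchEdge z' = T.matchEdge z := by
    apply Subtype.ext
    change (completeGraph n).ends _ = (completeGraph n).ends _
    rw [T.ends_matchEdge, T.ends_matchEdge, hl, hc]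
  have hz' := T.mem_ends_matchEdge z'
  rw [he, T.ends_emb_matchEdge, Sym2.mem_iff] at hz'
  rcases hz' with rfl | rfl
  · rfl
  · exact absurd hl.symm (T.co_ne_label z)

lemma exists_label_co {a b : (completeGraph n).V} (hab : a ≠ b) :
    ∃ z, T.label z = a ∧ T.co z = b := by
  let e : (completeGraph n).E := ⟨s(a, b), fun h => hab (Sym2.mk_isDiag_iff.1 h)⟩
  have ha : a ∈ (Y.ends (T.emb e)).map T.label := by
    rw [T.ends_map]
    exact Sym2.mem_mk_left a b
  obtain ⟨z, hz, rfl⟩ := Sym2.mem_map.1 ha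
  refine ⟨z, rfl, ?_⟩
  have h := T.ends_matchEdge z
  rw [T.matchEdge_eq_of_mem hz] at h
  exact (Sym2.congr_right.1 h).symm

/-- The vertex of cluster `a` matched into cluster `b`; for `a = b`, an arbitrary vertex of `a`. -/
noncomputable def port (a b : (completeGraph n).V) : Y.V :=
  open Classical in
  if h : ∃ z, T.label z = a ∧ T.co z = b then h.choose else (T.label_surj a).choose

@[simp] lemma label_port (a b : (completeGraph n).V) : T.label (T.port a b) = a := by
  unfold port
  split_ifs with h
  exacts [h.choose_spec.1, (T.label_surj a).choose_spec]

lemma co_port {a b : (completeGraph n).V} (hab : a ≠ b) : T.co (T.port a b) = b := by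
  rw [port, dif_pos (T.exists_label_co hab)]
  exact (T.exists_label_co hab).choose_spec.2

lemma port_label_co (z : Y.V) : T.port (T.label z) (T.co z) = z :=
  T.eq_of_label_eq_of_co_eq (T.label_port _ _) (T.co_port (T.co_ne_label z).symm)

lemma ne_port_of_co_ne {z : Y.V} {a b : (completeGraph n).V} (hab : a ≠ b) (h : T.co z ≠ b) :
    z ≠ T.port a b :=
  fun hz => h (hz ▸ T.co_port hab)

lemma port_ne_port {a b c : (completeGraph n).V} (hab : a ≠ b) (hac : a ≠ c) (hbc : b ≠ c) :
    T.port a b ≠ T.port a c :=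
  T.ne_port_of_co_ne hac (by rwa [T.co_port hab])

lemma adj_port_port {a b : (completeGraph n).V} (hab : a ≠ b) :
    Y.Adj (T.port a b) (T.port b a) := by
  have h : T.partner (T.port a b) = T.port b a := by
    rw [← T.port_label_co (T.partner _), T.co_partner, label_port]
    exact congrArg (T.port · a) (T.co_port hab)
  exact h ▸ T.adj_partner _

lemma preimage_label_eq_of_cover {a b c d : (completeGraph n).V}
    (hcover : ∀ e, e = a ∨ e = b ∨ e = c ∨ e = d) :
    T.label ⁻¹' {a} = {T.port a b, T.port a c, T.port a d} := by
  ext t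
  simp only [Set.mem_preimage, Set.mem_singleton_iff, Set.mem_insert_iff]
  constructor
  · rintro rfl
    rw [← T.port_label_co t]
    rcases hcover (T.co t) with h | h | h | h
    · exact absurd h (T.co_ne_label t)
    all_goals simp [h]
  · rintro (rfl | rfl | rfl) <;> simp

variable (hcon : T.ConstituentsHamiltonConnected)
include hcon

lemma hasPathOn_cluster_port_port {a b c : (completeGraph n).V} (hab : a ≠ b) (hca : c ≠ a)
    (hcb : c ≠ b) : Y.HasPathOn (T.label ⁻¹' {c}) (T.port c a) (T.port c b) :=
  T.hasPathOn_cluster hcon (T.label_port c a) (T.label_port c b) (T.port_ne_port hca hcb hab)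

/-- With four clusters, cluster `a` has three vertices, so being Hamilton-connected it is a
triangle. -/
lemma adj_port_port_of_cover {a b c d : (completeGraph n).V}
    (hcover : ∀ e, e = a ∨ e = b ∨ e = c ∨ e = d) (hab : a ≠ b) (hac : a ≠ c)
    (had : a ≠ d) (hbc : b ≠ c) (hbd : b ≠ d) (hcd : c ≠ d) :
    Y.Adj (T.port a b) (T.port a d) :=
  (T.hasPathOn_cluster_port_port hcon hbc hab hac).adj_of_subset_triple (by simp)
    (by rw [T.preimage_label_eq_of_cover hcover]; grind) (T.port_ne_port hab had hbd)
    (T.port_ne_port had hac hcd.symm)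

lemma hasPathOn_port_port {S : Finset (completeGraph n).V} {a b c d : (completeGraph n).V}
    (hc : c ∈ S) (hd : d ∈ S) (hcd : c ≠ d) (ha : a ∉ S) (hb : b ∉ S) :
    Y.HasPathOn (T.label ⁻¹' S) (T.port c a) (T.port d b) := by
  induction S using Finset.strongInduction generalizing a c with
  | H S ih =>
  have hdS : d ∈ S.erase c := Finset.mem_erase.2 ⟨hcd.symm, hd⟩
  obtain ⟨c', hc', hrest⟩ : ∃ c' ∈ S.erase c,
      Y.HasPathOn (T.label ⁻¹' (S.erase c)) (T.port c' c) (T.port d b) := by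
    by_cases hsingle : S.erase c = {d}
    · refine ⟨d, hdS, ?_⟩
      rw [hsingle, Finset.coe_singleton]
      exact T.hasPathOn_cluster_port_port hcon (ne_of_mem_of_not_mem hc hb) hcd.symm
        (ne_of_mem_of_not_mem hd hb)
    · obtain ⟨c', hc', hc'd⟩ : ∃ c' ∈ S.erase c, c' ≠ d := by
        by_contra! h
        exact hsingle (Finset.eq_singleton_iff_unique_mem.2 ⟨hdS, h⟩)
      exact ⟨c', hc', ih _ (Finset.erase_ssubset hc) hc' hdS hc'd (Finset.notMem_erase c S)
        fun h => hb (Finset.mem_of_mem_erase h)⟩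
  have hcc' : c ≠ c' := (Finset.ne_of_mem_erase hc').symm
  have hfirst := T.hasPathOn_cluster_port_port hcon
    (ne_of_mem_of_not_mem (Finset.mem_of_mem_erase hc') ha).symm (ne_of_mem_of_not_mem hc ha) hcc'
  have hpath := hfirst.join hrest
    ((Set.disjoint_singleton_left.2 (Finset.notMem_erase c S)).preimage T.label)
    (T.adj_port_port hcc')
  rwa [← Set.preimage_union, ← Set.insert_eq, ← Finset.coe_insert, Finset.insert_erase hc]
    at hpath

lemma hasPathOn_univ_of_label_eq {x y : Y.V} (hxy : x ≠ y) (hlabel : T.label x = T.label y) :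
    Y.HasPathOn Set.univ x y := by
  obtain ⟨m, -, hm⟩ := (T.hasPathOn_cluster hcon rfl hlabel.symm hxy).exists_adj_of_ne hxy
  obtain ⟨hma, hmx⟩ : T.label m = T.label x ∧ m ≠ x := hm.left_mem
  have hco : T.co x ≠ T.co m := fun h => hmx (T.eq_of_label_eq_of_co_eq hma h.symm)
  have htour := T.hasPathOn_port_port hcon (S := Finset.univ.erase (T.label x))
    (a := T.label x) (b := T.label x) (Finset.mem_erase.2 ⟨T.co_ne_label x, Finset.mem_univ _⟩)
    (Finset.mem_erase.2 ⟨hma ▸ T.co_ne_label m, Finset.mem_univ _⟩) hco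
    (Finset.notMem_erase _ _) (Finset.notMem_erase _ _)
  have hout : Y.Adj x (T.port (T.co x) (T.label x)) := by
    simpa only [T.port_label_co] using T.adj_port_port (T.co_ne_label x).symm
  have hin : Y.Adj (T.port (T.co m) (T.label x)) m := by
    simpa only [← hma, T.port_label_co] using T.adj_port_port (T.co_ne_label m)
  have hpath := (HasPathOn.singleton x).join (htour.join hm ?_ hin) ?_ hout
  · convert hpath
    ext w
    by_cases hw : T.label w = T.label x <;> by_cases hwx : w = x <;> simp_all
  · exact Set.disjoint_left.2 fun w h₁ h₂ => by simp_all
  · exact Set.disjoint_singleton_left.2 (by simp)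

lemma hasPathOn_univ_of_label_ne {x y : Y.V} (hn : 3 < n) (hlabel : T.label x ≠ T.label y)
    (hco : T.co x = T.co y → 4 < n) : Y.HasPathOn Set.univ x y := by
  set S := Finset.univ \ {T.label x, T.label y}
  have hcard : S.card = n - 2 := by
    rw [Finset.card_sdiff_of_subset (Finset.subset_univ _), Finset.card_pair hlabel,
      Finset.card_univ, card_completeGraph_V]
  obtain ⟨c, hc, d, hd, hcd, hcx, hdy⟩ := S.exists_distinct_avoiding (T.co x) (T.co y)
    (by omega) (fun h => by have := hco h; omega)
  have hxc : T.label x ≠ c := by rintro rfl; simp [S] at hc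
  have hdy' : d ≠ T.label y := by rintro rfl; simp [S] at hd
  have h₁ : Y.HasPathOn (T.label ⁻¹' {T.label x}) x (T.port (T.label x) c) :=
    T.hasPathOn_cluster hcon rfl (T.label_port _ _) (T.ne_port_of_co_ne hxc hcx.symm)
  have h₂ := T.hasPathOn_port_port hcon hc hd hcd (a := T.label x) (b := T.label y)
    (by simp [S]) (by simp [S])
  have h₃ : Y.HasPathOn (T.label ⁻¹' {T.label y}) (T.port (T.label y) d) y :=
    T.hasPathOn_cluster hcon (T.label_port _ _) rfl (T.ne_port_of_co_ne hdy'.symm hdy.symm).symm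
  have hpath := h₁.join (h₂.join h₃ ?_ (T.adj_port_port hdy')) ?_ (T.adj_port_port hxc)
  · convert hpath
    ext w
    by_cases hwx : T.label w = T.label x <;> by_cases hwy : T.label w = T.label y <;>
      simp_all [S]
  all_goals exact Set.disjoint_left.2 fun w h₁ h₂ => by simp_all [S]

lemma hasPathOn_univ_of_co_eq {x y : Y.V} (hn : n = 4) (hlabel : T.label x ≠ T.label y)
    (hco : T.co x = T.co y) : Y.HasPathOn Set.univ x y := by
  subst hn
  generalize hu : T.label x = u at hlabel
  generalize hv : T.label y = v at hlabel
  generalize hw : T.co x = w at hco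
  have hwu : w ≠ u := hw ▸ hu ▸ T.co_ne_label x
  have hwv : w ≠ v := hco ▸ hv ▸ T.co_ne_label y
  obtain ⟨z, hzv, hzu, hzw, hcover⟩ :=
    completeGraph_four_exists_fourth v u w hlabel.symm hwv.symm hwu.symm
  obtain rfl : T.port u w = x := hu ▸ hw ▸ T.port_label_co x
  obtain rfl : T.port v w = y := hv ▸ hco ▸ T.port_label_co y
  have hvuz := T.port_ne_port hlabel.symm hzv.symm hzu.symm
  have h₁ := T.hasPathOn_cluster_port_port hcon hwv hwu.symm hlabel
  have h₂ := (HasPathOn.singleton (T.port v u)).join (HasPathOn.singleton (T.port v z))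
    (Set.disjoint_singleton.2 hvuz) (T.adj_port_port_of_cover hcon hcover hlabel.symm hwv.symm
      hzv.symm hwu.symm hzu.symm hzw.symm)
  have h₃ := T.hasPathOn_port_port hcon (S := {z, w}) (a := v) (b := v) (by simp) (by simp) hzw
    (by simp [hzv.symm, hwv.symm]) (by simp [hzv.symm, hwv.symm])
  have hpath := h₁.join (h₂.join (h₃.join (HasPathOn.singleton (T.port v w)) ?_
    (T.adj_port_port hwv)) ?_ (T.adj_port_port hzv.symm)) ?_ (T.adj_port_port hlabel)
  · convert hpath
    ext t
    rcases hcover (T.label t) with h | h | h | h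
    · have ht : t ∈ T.label ⁻¹' {v} := h
      rw [T.preimage_label_eq_of_cover hcover] at ht
      rcases ht with rfl | rfl | rfl <;> simp
    all_goals simp [h]
  all_goals
    refine Set.disjoint_left.2 fun t h₁ h₂ => ?_
    simp at h₁ h₂
    grind [label_port, T.port_ne_port hlabel.symm hwv.symm hwu.symm,
        T.port_ne_port hzv.symm hwv.symm hzw]

end TruncationData

end Multigraph

open Multigraph in
/-- Let `Y` be a generalized truncation of the complete graph `K_n`, `n > 3`.
If every constituent graph of `Y` is Hamilton-connected, then `Y` is Hamilton-connected. -/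
theorem truncation_of_complete_hamiltonConnected (n : ℕ) (hn : 3 < n) (Y : Multigraph)
    (T : TruncationData (completeGraph n) Y)
    (hcon : ∀ v : Fin n, ∀ x y : Y.V, T.label x = v → T.label y = v → x ≠ y →
      ∃ p : Y.Walk x y, (∀ f ∈ p.edges, f ∉ Set.range T.emb) ∧ p.support.Nodup ∧
        ∀ w : Y.V, T.label w = v → w ∈ p.support) :
    Y.HamiltonConnected := by
  refine hamiltonConnected_iff.2 fun x y hxy => ?_
  by_cases hlabel : T.label x = T.label y
  · exact T.hasPathOn_univ_of_label_eq hcon hxy hlabel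
  by_cases hsplit : T.co x = T.co y ∧ n = 4
  · exact T.hasPathOn_univ_of_co_eq hcon hsplit.2 hlabel hsplit.1
  · refine T.hasPathOn_univ_of_label_ne hcon hn hlabel fun hco => ?_
    have : n ≠ 4 := fun h => hsplit ⟨hco, h⟩
    omega
end

section
/- If X is a non-planar graph, then every cohesive generalized truncation of X is non-planar. -/
namespace Multigraph

/-- The complete bipartite graph `K_{m,n}` as a multigraph. -/
def completeBipartiteGraph' (m n : ℕ) : Multigraph :=
  ⟨Fin m ⊕ Fin n, Fin m × Fin n, fun p => s(Sum.inl p.1, Sum.inr p.2)⟩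

/-- `H` is a minor of the part of `G` spanned by the vertices `A` and edges `F`:
there are nonempty, pairwise disjoint, connected branch sets in `A` (connected using
edges of `F`), one for each vertex of `H`, and for each edge of `H` an edge of `F`
joining the corresponding branch sets. -/
def IsMinorOn (H G : Multigraph) (A : Set G.V) (F : Set G.E) : Prop :=
  ∃ B : H.V → Set G.V,
    (∀ v, (B v).Nonempty) ∧ (∀ v, B v ⊆ A) ∧
    (∀ v, ∀ x ∈ B v, ∀ y ∈ B v,
      Relation.ReflTransGen
        (fun a b => a ∈ B v ∧ b ∈ B v ∧ ∃ f ∈ F, G.ends f = s(a, b)) x y) ∧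
    (∀ u v, u ≠ v → Disjoint (B u) (B v)) ∧
    (∀ e : H.E, ∃ u v, H.ends e = s(u, v) ∧
      ∃ f ∈ F, ∃ x y, G.ends f = s(x, y) ∧ x ∈ B u ∧ y ∈ B v)

/-- `H` is a minor of `G`. -/
def IsMinor (H G : Multigraph) : Prop :=
  IsMinorOn H G Set.univ Set.univ

/-- Planarity, via Wagner's characterization: no `K₅` minor and no `K_{3,3}` minor. -/
def Planar (G : Multigraph) : Prop :=
  ¬ IsMinor (completeGraph 5) G ∧ ¬ IsMinor (completeBipartiteGraph' 3 3) G

end Multigraph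

/-!
Contracting each constituent of a cohesive truncation `Y` of `X` to a single vertex, and
deleting the edges that become loops, gives back `X`. Since the constituents are connected,
every minor of `X` (in particular `K₅` or `K₃,₃`) is therefore a minor of `Y`.
-/

theorem Sym2.exists_eq_mk_of_map_eq_mk {α β : Type*} {f : α → β} {z : Sym2 α} {a b : β}
    (h : z.map f = s(a, b)) : ∃ x y, z = s(x, y) ∧ f x = a ∧ f y = b := by
  induction z using Sym2.ind with
  | h x y =>
    rcases Sym2.eq_iff.mp (h : s(f x, f y) = s(a, b)) with ⟨hx, hy⟩ | ⟨hy, hx⟩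
    · exact ⟨x, y, rfl, hx, hy⟩
    · exact ⟨y, x, Sym2.eq_swap, hx, hy⟩

namespace Multigraph

/-- The relation under which `IsMinorOn` asks branch sets to be connected. -/
def AdjIn (G : Multigraph) (S : Set G.V) (F : Set G.E) (a b : G.V) : Prop :=
  a ∈ S ∧ b ∈ S ∧ ∃ f ∈ F, G.ends f = s(a, b)

theorem AdjIn.mono {G : Multigraph} {S S' : Set G.V} {F F' : Set G.E} (hS : S ⊆ S')
    (hF : F ⊆ F') {a b : G.V} (h : G.AdjIn S F a b) : G.AdjIn S' F' a b :=
  let ⟨ha, hb, f, hf, hends⟩ := h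
  ⟨hS ha, hS hb, f, hF hf, hends⟩

/-- `X` arises from `Y` by contracting the fibres of `φ` and deleting edges. -/
structure IsContraction {X Y : Multigraph} (φ : Y.V → X.V) : Prop where
  surjective : Function.Surjective φ
  fiber_connected : ∀ v x y, φ x = v → φ y = v →
    Relation.ReflTransGen (Y.AdjIn (φ ⁻¹' {v}) Set.univ) x y
  lift_edge : ∀ e, ∃ f, (Y.ends f).map φ = X.ends e

namespace IsContraction

variable {X Y : Multigraph} {φ : Y.V → X.V}

theorem exists_lift_ends (hφ : IsContraction φ) {e : X.E} {a b : X.V}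
    (he : X.ends e = s(a, b)) : ∃ f x y, Y.ends f = s(x, y) ∧ φ x = a ∧ φ y = b :=
  let ⟨f, hf⟩ := hφ.lift_edge e
  ⟨f, Sym2.exists_eq_mk_of_map_eq_mk (hf.trans he)⟩

theorem reflTransGen_preimage (hφ : IsContraction φ) {S : Set X.V} {u v : X.V}
    (huv : Relation.ReflTransGen (X.AdjIn S Set.univ) u v) (hu : u ∈ S) {x y : Y.V}
    (hx : φ x = u) (hy : φ y = v) :
    Relation.ReflTransGen (Y.AdjIn (φ ⁻¹' S) Set.univ) x y := by
  have fiber {w : X.V} (hw : w ∈ S) {x y : Y.V} (hx : φ x = w) (hy : φ y = w) :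
      Relation.ReflTransGen (Y.AdjIn (φ ⁻¹' S) Set.univ) x y :=
    Relation.ReflTransGen.mono
      (fun _ _ => AdjIn.mono (Set.preimage_mono (Set.singleton_subset_iff.mpr hw)) le_rfl) _ _
      (hφ.fiber_connected w x y hx hy)
  induction huv generalizing y with
  | refl => exact fiber hu hx hy
  | tail _ step ih =>
    obtain ⟨hb, hc, e, -, he⟩ := step
    obtain ⟨f, x₁, x₂, hf, h₁, h₂⟩ := hφ.exists_lift_ends he
    have hcross : Y.AdjIn (φ ⁻¹' S) Set.univ x₁ x₂ :=
      ⟨by simpa [h₁], by simpa [h₂], f, trivial, hf⟩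
    exact ((ih h₁).tail hcross).trans (fiber hc h₂ hy)

theorem isMinor {H : Multigraph} (hφ : IsContraction φ) (hH : IsMinor H X) : IsMinor H Y := by
  obtain ⟨B, hne, -, hconn, hdisj, hedge⟩ := hH
  refine ⟨fun v => φ ⁻¹' B v, fun v => ?_, fun v => Set.subset_univ _, ?_,
    fun u v huv => (hdisj u v huv).preimage φ, fun e => ?_⟩
  · obtain ⟨w, hw⟩ := hne v
    obtain ⟨x, rfl⟩ := hφ.surjective w
    exact ⟨x, hw⟩
  · exact fun v x hx y hy => hφ.reflTransGen_preimage (hconn v _ hx _ hy) hx rfl rfl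
  · obtain ⟨u, v, he, e', -, a, b, he', ha, hb⟩ := hedge e
    obtain ⟨f, x, y, hf, rfl, rfl⟩ := hφ.exists_lift_ends he'
    exact ⟨u, v, he, f, trivial, x, y, hf, ha, hb⟩

theorem planar (hφ : IsContraction φ) (hY : Y.Planar) : X.Planar :=
  ⟨fun h => hY.1 (hφ.isMinor h), fun h => hY.2 (hφ.isMinor h)⟩

end IsContraction

theorem TruncationData.isContraction_label {X Y : Multigraph} (T : TruncationData X Y)
    (hcoh : T.Cohesive) : IsContraction T.label where
  surjective := T.label_surj
  fiber_connected v x y hx hy :=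
    Relation.ReflTransGen.mono (fun _ _ ⟨ha, hb, f, _, hf⟩ => ⟨ha, hb, f, trivial, hf⟩) _ _
      (hcoh v x y hx hy)
  lift_edge e := ⟨T.emb e, T.ends_map e⟩

end Multigraph

open Multigraph in
theorem cohesive_truncation_nonplanar_general (X Y : Multigraph)
    (hXnp : ¬ X.Planar) (T : TruncationData X Y) (hcoh : T.Cohesive) :
    ¬ Y.Planar :=
  fun hY => hXnp ((T.isContraction_label hcoh).planar hY)

open Multigraph in
/-- If `X` is a non-planar graph, then every cohesive generalized
truncation of `X` is non-planar. -/
theorem cohesive_truncation_nonplanar (X Y : Multigraph) (hX : X.IsSimple)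
    (hXnp : ¬ X.Planar) (T : TruncationData X Y) (hcoh : T.Cohesive) :
    ¬ Y.Planar :=
  cohesive_truncation_nonplanar_general X Y hXnp T hcoh
end

section
/- If X is a graph whose maximum valency d is even, then the complete generalized truncation of X has chromatic index d (is class I). -/
namespace Multigraph

/-- A proper edge coloring with `k` colors: distinct edges sharing a vertex receive
distinct colors. -/
def ProperEdgeColorable (Y : Multigraph) (k : ℕ) : Prop :=
  ∃ c : Y.E → Fin k, ∀ e f : Y.E, e ≠ f →
    (∃ v : Y.V, v ∈ Y.ends e ∧ v ∈ Y.ends f) → c e ≠ c f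

/-- The chromatic index equals `k`. -/
def ChromaticIndexEq (Y : Multigraph) (k : ℕ) : Prop :=
  Y.ProperEdgeColorable k ∧ ∀ m : ℕ, Y.ProperEdgeColorable m → k ≤ m

end Multigraph

/-!
Every vertex of `Y` lies on exactly one edge of the perfect matching `F(M)`, so these edges can
all share one colour, and it remains to colour the constituents with `d - 1` colours. Number the
vertices of each cluster injectively by `0, …, d - 1`, through the edge of `X` carried by their
matching edge (a cluster has at most `d` vertices). Every constituent then maps, edge-injectively
at each vertex, into the complete graph `K_d`, and `K_d` has the round-robin edge colouring with
`d - 1` colours because `d` is even. Conversely, by completeness a vertex in the cluster of a vertex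
of valency `d` is incident with `d` edges, which need `d` distinct colours.
-/

namespace Multigraph

def complete (W : Type) : Multigraph := ⟨W, {z : Sym2 W // ¬ z.IsDiag}, Subtype.val⟩

/-- The round-robin edge colouring of `K_{n+1}` on `0, …, n`, with `n` in the role of `∞`. -/
def roundRobin (n i j : ℕ) : ℕ :=
  if i = n then 2 * j % n else if j = n then 2 * i % n else (i + j) % n

lemma roundRobin_comm (n i j : ℕ) : roundRobin n i j = roundRobin n j i := by
  unfold roundRobin
  split_ifs <;> simp_all [Nat.add_comm]

lemma roundRobin_lt {n : ℕ} (hn : 0 < n) (i j : ℕ) : roundRobin n i j < n := by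
  unfold roundRobin
  split_ifs <;> exact Nat.mod_lt _ hn

lemma roundRobin_ne {n a b c : ℕ} (hn : Odd n) (ha : a ≤ n) (hb : b ≤ n) (hc : c ≤ n)
    (hab : a ≠ b) (hac : a ≠ c) (hbc : b ≠ c) : roundRobin n a b ≠ roundRobin n a c := by
  have hcop : Nat.Coprime 2 n := Nat.coprime_two_left.mpr hn
  intro h
  unfold roundRobin at h
  split_ifs at h with ha' hb' hc' hc'
  · exact hbc ((Nat.ModEq.cancel_left_of_coprime hcop.symm h).eq_of_lt_of_lt (by omega) (by omega))
  · omega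
  · rw [two_mul] at h
    exact hac ((Nat.ModEq.add_left_cancel' a h).eq_of_lt_of_lt (by omega) (by omega))
  · rw [two_mul] at h
    exact hab ((Nat.ModEq.add_left_cancel' a h).eq_of_lt_of_lt (by omega) (by omega)).symm
  · exact hbc ((Nat.ModEq.add_left_cancel' a h).eq_of_lt_of_lt (by omega) (by omega))

theorem properEdgeColorable_complete_fin {n : ℕ} (hn : Odd n) :
    (complete (Fin (n + 1))).ProperEdgeColorable n := by
  let κ : Sym2 (Fin (n + 1)) → ℕ :=
    Sym2.lift ⟨fun i j => roundRobin n i j, fun i j => roundRobin_comm n i j⟩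
  refine ⟨fun z => ⟨κ z.1, ?_⟩, ?_⟩
  · induction z.1 using Sym2.ind with
    | _ i j => exact roundRobin_lt hn.pos i j
  rintro ⟨e, he⟩ ⟨f, hf⟩ hne ⟨a, hae, haf⟩
  obtain ⟨b, rfl⟩ := Sym2.mem_iff_exists.mp hae
  obtain ⟨c, rfl⟩ := Sym2.mem_iff_exists.mp haf
  have hbc : b ≠ c := by rintro rfl; exact hne rfl
  intro hκ
  refine roundRobin_ne hn a.is_le b.is_le c.is_le ?_ ?_ (Fin.val_injective.ne hbc)
    (congrArg Fin.val hκ)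
  · exact Fin.val_injective.ne fun h => he (Sym2.mk_isDiag_iff.mpr h)
  · exact Fin.val_injective.ne fun h => hf (Sym2.mk_isDiag_iff.mpr h)

theorem ProperEdgeColorable.of_locallyInjective {Z K : Multigraph} {k : ℕ}
    (hK : K.ProperEdgeColorable k) (φ : Z.V → K.V) (g : Z.E → K.E)
    (hg : ∀ e, K.ends (g e) = (Z.ends e).map φ)
    (hinj : ∀ v e f, v ∈ Z.ends e → v ∈ Z.ends f → g e = g f → e = f) :
    Z.ProperEdgeColorable k := by
  obtain ⟨c, hc⟩ := hK
  refine ⟨c ∘ g, fun e f hne ⟨v, he, hf⟩ =>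
    hc _ _ (fun h => hne (hinj v e f he hf h)) ⟨φ v, ?_, ?_⟩⟩
  · rw [hg]; exact Sym2.mem_map.mpr ⟨v, he, rfl⟩
  · rw [hg]; exact Sym2.mem_map.mpr ⟨v, hf, rfl⟩

theorem ProperEdgeColorable.succ_of_deleteEdges {Y : Multigraph} {M : Set Y.E} {k : ℕ}
    (hM : ∀ e ∈ M, ∀ f ∈ M, ∀ v, v ∈ Y.ends e → v ∈ Y.ends f → e = f)
    (h : (Y.deleteEdges M).ProperEdgeColorable k) : Y.ProperEdgeColorable (k + 1) := by
  classical
  obtain ⟨c, hc⟩ := h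
  refine ⟨fun f => if hf : f ∈ M then Fin.last k else (c ⟨f, hf⟩).castSucc, ?_⟩
  rintro e f hne ⟨v, he, hf⟩
  by_cases heM : e ∈ M <;> by_cases hfM : f ∈ M <;> simp only [heM, hfM, dite_true, dite_false]
  · exact absurd (hM e heM f hfM v he hf) hne
  · exact (Fin.castSucc_lt_last _).ne'
  · exact (Fin.castSucc_lt_last _).ne
  · exact fun h => hc ⟨e, heM⟩ ⟨f, hfM⟩ (fun h' => hne (congrArg Subtype.val h'))
      ⟨v, he, hf⟩ (Fin.castSucc_injective _ h)

theorem ProperEdgeColorable.degree_le {Y : Multigraph} {m : ℕ} (h : Y.ProperEdgeColorable m)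
    (u : Y.V) : Y.degree u ≤ m := by
  obtain ⟨c, hc⟩ := h
  calc Y.degree u ≤ (Set.univ : Set (Fin m)).encard :=
        Set.encard_le_encard_of_injOn (Set.mapsTo_univ _ _) fun e he f hf hcef =>
          by_contra fun hne => hc e f hne ⟨u, he, hf⟩ hcef
    _ = m := by simp

theorem exists_injOn_incidence {X : Multigraph} {v : X.V} {d : ℕ} [NeZero d]
    (h : X.degree v ≤ d) : ∃ F : X.E → Fin d, Set.InjOn F {e | v ∈ X.ends e} := by
  obtain ⟨F, -, hF⟩ := (Set.finite_of_encard_le_coe h).exists_injOn_of_encard_le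
    (t := (Set.univ : Set (Fin d))) (by simpa [degree] using h)
  exact ⟨F, hF⟩

namespace TruncationData

variable {X Y : Multigraph} (T : TruncationData X Y)

lemma label_mem_ends {u : Y.V} {e : X.E} (hu : u ∈ Y.ends (T.emb e)) :
    T.label u ∈ X.ends e := by
  rw [← T.ends_map e]
  exact Sym2.mem_map.mpr ⟨u, hu, rfl⟩

noncomputable def matchingEdge (u : Y.V) : X.E := (T.matching u).exists.choose

lemma mem_ends_emb_matchingEdge (u : Y.V) : u ∈ Y.ends (T.emb (T.matchingEdge u)) :=
  (T.matching u).exists.choose_spec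

lemma eq_of_matchingEdge_eq (hX : X.Loopless) {x y : Y.V} (hl : T.label x = T.label y)
    (he : T.matchingEdge x = T.matchingEdge y) : x = y := by
  by_contra hne
  have hends : Y.ends (T.emb (T.matchingEdge x)) = s(x, y) := (Sym2.mem_and_mem_iff hne).mp
    ⟨T.mem_ends_emb_matchingEdge x, he ▸ T.mem_ends_emb_matchingEdge y⟩
  apply hX (T.matchingEdge x)
  rw [← T.ends_map, hends, Sym2.map_mk, hl]
  exact Sym2.mk_isDiag_iff.mpr rfl

lemma one_le_degree_label (u : Y.V) : 1 ≤ X.degree (T.label u) :=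
  Set.one_le_encard_iff_nonempty.mpr ⟨_, T.label_mem_ends (T.mem_ends_emb_matchingEdge u)⟩

lemma exists_injective_on_clusters (hX : X.Loopless) {d : ℕ} [NeZero d]
    (hmax : ∀ v, X.degree v ≤ d) :
    ∃ φ : Y.V → Fin d, ∀ x y, T.label x = T.label y → φ x = φ y → x = y := by
  choose F hF using fun v => exists_injOn_incidence (hmax v)
  refine ⟨fun x => F (T.label x) (T.matchingEdge x), fun x y hl hxy => ?_⟩
  refine T.eq_of_matchingEdge_eq hX hl (hF (T.label x) ?_ ?_ (by simpa [hl] using hxy))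
  · exact T.label_mem_ends (T.mem_ends_emb_matchingEdge x)
  · exact hl ▸ T.label_mem_ends (T.mem_ends_emb_matchingEdge y)

lemma exists_ends_eq_of_notMem_range {f : Y.E} (hf : f ∉ Set.range T.emb) {u : Y.V}
    (hu : u ∈ Y.ends f) : ∃ z, Y.ends f = s(u, z) ∧ u ≠ z ∧ T.label u = T.label z := by
  obtain ⟨z, hz⟩ := Sym2.mem_iff_exists.mp hu
  refine ⟨z, hz, ?_, ?_⟩
  · rintro rfl
    exact T.simple.1 ⟨f, hf⟩ (show (Y.ends f).IsDiag from hz ▸ Sym2.mk_isDiag_iff.mpr rfl)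
  · have hdiag := T.cluster f hf
    rwa [hz, Sym2.map_mk, Sym2.mk_isDiag_iff] at hdiag

theorem properEdgeColorable_deleteEdges_range (hX : X.Loopless) {n : ℕ} (hn : Odd n)
    (hmax : ∀ v, X.degree v ≤ (n + 1 : ℕ)) :
    (Y.deleteEdges (Set.range T.emb)).ProperEdgeColorable n := by
  obtain ⟨φ, hφ⟩ := T.exists_injective_on_clusters hX hmax
  have hnd : ∀ f : Y.E, f ∉ Set.range T.emb → ¬ ((Y.ends f).map φ).IsDiag := by
    intro f hf
    obtain ⟨z, hz, huz, hl⟩ := T.exists_ends_eq_of_notMem_range hf (Sym2.out_fst_mem (Y.ends f))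
    rw [hz, Sym2.map_mk, Sym2.mk_isDiag_iff]
    exact fun h => huz (hφ _ z hl h)
  refine (properEdgeColorable_complete_fin hn).of_locallyInjective (Z := Y.deleteEdges _) φ
    (fun f => ⟨(Y.ends f.1).map φ, hnd f.1 f.2⟩) (fun _ => rfl) ?_
  rintro u ⟨e, he⟩ ⟨f, hf⟩ hue huf hef
  obtain ⟨y, hy, -, hly⟩ := T.exists_ends_eq_of_notMem_range he hue
  obtain ⟨z, hz, -, hlz⟩ := T.exists_ends_eq_of_notMem_range hf huf
  have hφyz : φ y = φ z := by
    have := congrArg Subtype.val hef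
    simp only [hy, hz] at this
    exact Sym2.congr_right.mp this
  have hyz : y = z := hφ y z (hly.symm.trans hlz) hφyz
  exact T.simple.2 ⟨e, he⟩ ⟨f, hf⟩ (show Y.ends e = Y.ends f by rw [hy, hz, hyz])

theorem degree_label_le_of_complete (hcomp : T.Complete) (u : Y.V) :
    X.degree (T.label u) ≤ Y.degree u := by
  have : Nonempty Y.V := ⟨u⟩
  have : Nonempty Y.E := ⟨T.emb (T.matchingEdge u)⟩
  have hw : ∀ e, T.label u ∈ X.ends e → ∃ w ∈ Y.ends (T.emb e), T.label w = T.label u :=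
    fun e he => Sym2.mem_map.mp (T.ends_map e ▸ he)
  choose! w hw_mem hw_label using hw
  have hlink : ∀ e, T.label u ∈ X.ends e → ∃ f, u ∈ Y.ends f ∧
      (f = T.emb e ∨ f ∉ Set.range T.emb ∧ Y.ends f = s(u, w e)) := fun e he => by
    by_cases hwu : w e = u
    · exact ⟨T.emb e, hwu ▸ hw_mem e he, Or.inl rfl⟩
    · obtain ⟨f, hf, hends⟩ := hcomp u (w e) (Ne.symm hwu) (hw_label e he).symm
      exact ⟨f, hends ▸ Sym2.mem_mk_left _ _, Or.inr ⟨hf, hends⟩⟩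
  choose! link hlink_mem hlink_spec using hlink
  refine Set.encard_le_encard_of_injOn (f := link) (fun e he => hlink_mem e he) ?_
  intro e₁ h₁ e₂ h₂ hlink_eq
  rcases hlink_spec e₁ h₁ with h₁' | ⟨hr₁, hs₁⟩ <;>
    rcases hlink_spec e₂ h₂ with h₂' | ⟨hr₂, hs₂⟩
  · exact T.emb_inj (h₁'.symm.trans (hlink_eq.trans h₂'))
  · exact absurd ⟨e₁, (hlink_eq ▸ h₁').symm⟩ hr₂
  · exact absurd ⟨e₂, (hlink_eq.symm ▸ h₂').symm⟩ hr₁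
  · have hw_eq : w e₁ = w e₂ := Sym2.congr_right.mp (hs₁.symm.trans (hlink_eq ▸ hs₂))
    exact (T.matching (w e₁)).unique (hw_mem e₁ h₁) (hw_eq ▸ hw_mem e₂ h₂)

end TruncationData

theorem TruncationData.properEdgeColorable {X Y : Multigraph} (T : TruncationData X Y)
    (hX : X.Loopless) {n : ℕ} (hn : Odd n)
    (hmax : ∀ v, X.degree v ≤ (n + 1 : ℕ)) : Y.ProperEdgeColorable (n + 1) := by
  refine (T.properEdgeColorable_deleteEdges_range hX hn hmax).succ_of_deleteEdges ?_
  rintro _ ⟨a, rfl⟩ _ ⟨b, rfl⟩ v hva hvb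
  rw [(T.matching v).unique hva hvb]

end Multigraph

open Multigraph in
/-- If `X` is a graph whose maximum valency `d` is even, then the complete
generalized truncation of `X` has chromatic index `d` (is class I). -/
theorem complete_truncation_classI_of_even (X Y : Multigraph) (hX : X.IsSimple)
    (d : ℕ) (hd : Even d) (hmax : ∀ v : X.V, X.degree v ≤ (d : ℕ∞))
    (hattain : ∃ v : X.V, X.degree v = (d : ℕ∞))
    (T : TruncationData X Y) (hcomp : T.Complete) :
    Y.ChromaticIndexEq d := by
  obtain ⟨v, hv⟩ := hattain
  obtain ⟨u, rfl⟩ := T.label_surj v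
  obtain ⟨n, rfl⟩ : ∃ n, d = n + 1 :=
    Nat.exists_eq_add_one.mpr (by exact_mod_cast hv ▸ T.one_le_degree_label u)
  refine ⟨T.properEdgeColorable hX.1 (Nat.not_even_iff_odd.mp (Nat.even_add_one.mp hd)) hmax,
    fun m hm => ?_⟩
  have hle := (T.degree_label_le_of_complete hcomp u).trans (hm.degree_le u)
  rw [hv] at hle
  exact_mod_cast hle
end
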